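/- arXiv:1905.09251 — 8 statements merged into one kernel-verified Lean document; each statement's English description precedes it below -/
import Mathlib

section
/- Let J ⊆ {1, …, n}. Assume that for every attribute C ∈ A'_J ∩ A''_J the functional dependency A_R → C holds in the partial-witness relation W_J. Then every partial witness extends to a full witness: for every tuple v over A_R ∪ A'_J with v|A_R ∈ R and v|A_j ∈ X_j for all j ∈ J, there exists a tuple u ∈ W such that u agrees with v on all of A_R ∪ A'_J. (The key extension step in the proof of Theorem 1.) -/
/-- Restriction of a tuple over `A` to a subschema `B ⊆ A`. -/
def restrict {α β : Type*} {A B : Set α} (h : B ⊆ A) (t : ↥A → β) : ↥B → β :=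
  fun x => t ⟨x.1, h x.2⟩

/-- Projection of a set of tuples over `A` onto `B ⊆ A`. -/
def proj {α β : Type*} {A B : Set α} (h : B ⊆ A) (X : Set (↥A → β)) : Set (↥B → β) :=
  restrict h '' X

/-- Natural join of the relations `X j` (with schema `A j`) over `⋃ j, A j`. -/
def joinW {α β : Type*} {n : ℕ} (A : Fin n → Set α) (X : ∀ j, Set (↥(A j) → β)) :
    Set (↥(⋃ j, A j) → β) :=
  { u | ∀ j, restrict (Set.subset_iUnion A j) u ∈ X j }

/-- The functional dependency `Y → C` holds in relation `X` with schema `A`: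
any two tuples of `X` agreeing on `Y` agree at `C`. -/
def FD {α β : Type*} {A : Set α} (X : Set (↥A → β)) (Y : Set α) (C : α)
    (hY : Y ⊆ A) (hC : C ∈ A) : Prop :=
  ∀ t₁ ∈ X, ∀ t₂ ∈ X, restrict hY t₁ = restrict hY t₂ → t₁ ⟨C, hC⟩ = t₂ ⟨C, hC⟩

/-- The partial-witness relation `W_J`: tuples `v` over `A_R ∪ A'_J` with
`v|A_R ∈ R` and `v|A_j ∈ X_j` for every `j ∈ J`. -/
def WJ {α β : Type*} {n : ℕ} (A : Fin n → Set α) (X : ∀ j, Set (↥(A j) → β))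
    (AR : Set α) (hAR : AR ⊆ ⋃ j, A j) (J : Set (Fin n)) :
    Set (↥(AR ∪ ⋃ j ∈ J, A j) → β) :=
  { v | restrict Set.subset_union_left v ∈ proj hAR (joinW A X) ∧
        ∀ j, ∀ hj : j ∈ J,
          restrict ((Set.subset_biUnion_of_mem hj).trans Set.subset_union_right) v ∈ X j }

/-- **Key extension step in the proof of Theorem 1.** If for every attribute
`C ∈ A'_J ∩ A''_J` the functional dependency `A_R → C` holds in the partial-witness
relation `W_J`, then every partial witness `v ∈ W_J` extends to a full witness
`u ∈ W` agreeing with `v` on all of `A_R ∪ A'_J`. -/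
theorem partial_witness_extends {α β : Type*} {n : ℕ}
    (A : Fin n → Set α) (X : ∀ j, Set (↥(A j) → β))
    (AR : Set α) (hAR : AR ⊆ ⋃ j, A j) (J : Set (Fin n))
    (hfd : ∀ C : α, (hC' : C ∈ ⋃ j ∈ J, A j) → C ∈ ⋃ j ∈ Jᶜ, A j →
      FD (WJ A X AR hAR J) AR C Set.subset_union_left (Set.mem_union_right _ hC'))
    (v : ↥(AR ∪ ⋃ j ∈ J, A j) → β) (hv : v ∈ WJ A X AR hAR J) :
    ∃ u ∈ joinW A X, ∀ a : α, ∀ ha : a ∈ AR ∪ ⋃ j ∈ J, A j,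
      u ⟨a, Set.union_subset hAR (Set.iUnion₂_subset fun j _ => Set.subset_iUnion A j) ha⟩ =
        v ⟨a, ha⟩ := by
  classical
  obtain ⟨hproj, hX⟩ := hv
  obtain ⟨w, hw, hwv⟩ := hproj
  have hsub : AR ∪ ⋃ j ∈ J, A j ⊆ ⋃ j, A j :=
    Set.union_subset hAR (Set.iUnion₂_subset fun j _ => Set.subset_iUnion A j)
  have hv' : restrict hsub w ∈ WJ A X AR hAR J := by
    refine ⟨⟨w, hw, rfl⟩, fun j hj => ?_⟩
    exact hw j
  have hagree : restrict (Set.subset_union_left) v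
      = restrict (A := AR ∪ ⋃ j ∈ J, A j) (Set.subset_union_left) (restrict hsub w) := by
    rw [← hwv]; rfl
  have key : ∀ a : α, ∀ ha : a ∈ AR ∪ ⋃ j ∈ J, A j, a ∈ ⋃ j ∈ Jᶜ, A j →
      v ⟨a, ha⟩ = w ⟨a, hsub ha⟩ := by
    intro a ha ha''
    rcases ha with haR | ha'
    · exact (congrFun hwv ⟨a, haR⟩).symm
    · exact hfd a ha' ha'' v ⟨⟨w, hw, hwv⟩, hX⟩ (restrict hsub w) hv' hagree
  refine ⟨fun x => if h : (x : α) ∈ AR ∪ ⋃ j ∈ J, A j then v ⟨x, h⟩ else w x, ?_, ?_⟩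
  · intro j
    by_cases hj : j ∈ J
    · have heq : restrict (Set.subset_iUnion A j)
          (fun x : ↥(⋃ j, A j) => if h : (x : α) ∈ AR ∪ ⋃ j ∈ J, A j then v ⟨x, h⟩ else w x)
          = restrict ((Set.subset_biUnion_of_mem hj).trans Set.subset_union_right) v := by
        funext x
        have hx : (x : α) ∈ AR ∪ ⋃ j ∈ J, A j :=
          Or.inr (Set.mem_biUnion hj x.2)
        simp only [restrict, dif_pos hx]
      rw [heq]; exact hX j hj
    · have heq : restrict (Set.subset_iUnion A j)
          (fun x : ↥(⋃ j, A j) => if h : (x : α) ∈ AR ∪ ⋃ j ∈ J, A j then v ⟨x, h⟩ else w x)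
          = restrict (Set.subset_iUnion A j) w := by
        funext x
        simp only [restrict]
        by_cases hx : (x : α) ∈ AR ∪ ⋃ j ∈ J, A j
        · rw [dif_pos hx]
          exact key x hx (Set.mem_biUnion hj x.2)
        · rw [dif_neg hx]
      rw [heq]; exact hw j
  · intro a ha
    simp only [dif_pos ha]
end

section
/- (Theorem 1.) Let J ⊆ {1, …, n} with i ∈ J. Assume that for every attribute C ∈ A'_J, at least one of the following holds: (a) the functional dependency A_R → C holds in the partial-witness relation W_J, or (b) C ∉ A''_J (C does not occur in any table outside J). Then for every R' ⊆ R the provenance of R' in X_i computed from the full join equals the provenance computed from the reduced join over J only: π_{A_i}({ u ∈ W : u|A_R ∈ R' }) = π_{A_i}({ v a tuple over A_R ∪ A'_J : v|A_R ∈ R' and v|A_j ∈ X_j for every j ∈ J }). -/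
/-- **Theorem 1.** Let `i ∈ J`. If for every attribute `C ∈ A'_J` either the functional
dependency `A_R → C` holds in the partial-witness relation `W_J`, or `C ∉ A''_J`, then
for every `R' ⊆ R` the provenance of `R'` in `X_i` computed from the full join equals
the provenance computed from the reduced join over `J` only. -/
theorem theorem1 {α β : Type*} {n : ℕ}
    (A : Fin n → Set α) (X : ∀ j, Set (↥(A j) → β))
    (AR : Set α) (hAR : AR ⊆ ⋃ j, A j)
    (J : Set (Fin n)) (i : Fin n) (hi : i ∈ J)
    (hyp : ∀ C : α, (hC' : C ∈ ⋃ j ∈ J, A j) →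
      FD (WJ A X AR hAR J) AR C Set.subset_union_left (Set.mem_union_right _ hC') ∨
        C ∉ ⋃ j ∈ Jᶜ, A j)
    (R' : Set (↥AR → β)) (hR' : R' ⊆ proj hAR (joinW A X)) :
    proj (Set.subset_iUnion A i) { u ∈ joinW A X | restrict hAR u ∈ R' } =
      proj ((Set.subset_biUnion_of_mem hi).trans Set.subset_union_right :
            A i ⊆ AR ∪ ⋃ j ∈ J, A j)
        { v : ↥(AR ∪ ⋃ j ∈ J, A j) → β |
            restrict Set.subset_union_left v ∈ R' ∧
            ∀ j, ∀ hj : j ∈ J,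
              restrict ((Set.subset_biUnion_of_mem hj).trans Set.subset_union_right) v ∈ X j } := by
  classical
  have hsub : (AR ∪ ⋃ j ∈ J, A j) ⊆ ⋃ j, A j :=
    Set.union_subset hAR (Set.iUnion₂_subset fun j _ => Set.subset_iUnion A j)
  ext t
  constructor
  · rintro ⟨u, ⟨hu, huR⟩, rfl⟩
    exact ⟨restrict hsub u, ⟨huR, fun j hj => hu j⟩, rfl⟩
  · rintro ⟨v, ⟨hvR, hvX⟩, rfl⟩
    obtain ⟨w, hw, hwAR⟩ := hR' hvR
    have hvWJ : v ∈ WJ A X AR hAR J := ⟨hR' hvR, hvX⟩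
    have hwWJ : restrict hsub w ∈ WJ A X AR hAR J :=
      ⟨⟨w, hw, rfl⟩, fun j hj => hw j⟩
    have hagree : restrict (Set.subset_union_left : AR ⊆ AR ∪ ⋃ j ∈ J, A j) v =
        restrict Set.subset_union_left (restrict hsub w) := by
      funext x
      exact (congrFun hwAR x).symm
    -- v and w agree on attributes of AR ∪ A'_J that also occur outside J
    have key : ∀ (C : α) (hC : C ∈ AR ∪ ⋃ j ∈ J, A j) (hC2 : C ∈ ⋃ j, A j),
        C ∈ ⋃ j ∈ Jᶜ, A j → v ⟨C, hC⟩ = w ⟨C, hC2⟩ := by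
      intro C hC hC2 hCout
      rcases hC with hC | hC
      · exact (congrFun hwAR ⟨C, hC⟩).symm
      · rcases hyp C hC with hFD | hnot
        · exact hFD v hvWJ (restrict hsub w) hwWJ hagree
        · exact absurd hCout hnot
    -- define the full-join tuple u
    set u : ↥(⋃ j, A j) → β := fun x =>
      if h : (x : α) ∈ AR ∪ ⋃ j ∈ J, A j then v ⟨x, h⟩ else w x with hu_def
    have hures : ∀ (C : α) (hC : C ∈ AR ∪ ⋃ j ∈ J, A j),
        u ⟨C, hsub hC⟩ = v ⟨C, hC⟩ := by
      intro C hC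
      simp only [hu_def, dif_pos hC]
    refine ⟨u, ⟨?_, ?_⟩, ?_⟩
    · -- u ∈ joinW
      intro j
      by_cases hj : j ∈ J
      · have : restrict (Set.subset_iUnion A j) u =
            restrict ((Set.subset_biUnion_of_mem hj).trans Set.subset_union_right) v := by
          funext x
          exact hures x.1 (Set.mem_union_right _ (Set.mem_biUnion hj x.2))
        rw [this]
        exact hvX j hj
      · have : restrict (Set.subset_iUnion A j) u = restrict (Set.subset_iUnion A j) w := by
          funext x
          by_cases hx : (x : α) ∈ AR ∪ ⋃ j ∈ J, A j
          · have h1 := hures x.1 hx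
            have h2 := key x.1 hx (Set.subset_iUnion A j x.2)
              (Set.mem_biUnion (show j ∈ Jᶜ from hj) x.2)
            simpa [restrict] using h1.trans h2
          · simp only [restrict, hu_def, dif_neg hx]
        rw [this]
        exact hw j
    · -- u|AR ∈ R'
      have : restrict hAR u =
          restrict (Set.subset_union_left : AR ⊆ AR ∪ ⋃ j ∈ J, A j) v := by
        funext x
        exact hures x.1 (Or.inl x.2)
      rw [this]
      exact hvR
    · -- projections to A i agree
      funext x
      exact hures x.1 (Set.mem_union_right _ (Set.mem_biUnion hi x.2))
end

section
/- (Corollary 2.) Suppose X_i has a key contained in the result schema: there is K ⊆ A_i with K ⊆ A_R such that the functional dependency K → C holds in X_i for every C ∈ A_i. Then for every R' ⊆ R the provenance of R' in X_i can be computed by a single join of R' with X_i: π_{A_i}({ u ∈ W : u|A_R ∈ R' }) = π_{A_i}({ v a tuple over A_R ∪ A_i : v|A_R ∈ R' and v|A_i ∈ X_i }). -/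
/-- **Corollary 2.** If `X_i` has a key `K` contained in the result schema
(`K ⊆ A_i`, `K ⊆ A_R`, and `K → C` holds in `X_i` for every `C ∈ A_i`), then for every
`R' ⊆ R` the provenance of `R'` in `X_i` is computed by a single join of `R'` with
`X_i`: `π_{A_i}({u ∈ W : u|A_R ∈ R'}) = π_{A_i}({v over A_R ∪ A_i : v|A_R ∈ R' and
v|A_i ∈ X_i})`. -/
theorem corollary2 {α β : Type*} {n : ℕ}
    (A : Fin n → Set α) (X : ∀ j, Set (↥(A j) → β))
    (AR : Set α) (hAR : AR ⊆ ⋃ j, A j)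
    (i : Fin n) (K : Set α) (hKAi : K ⊆ A i) (hKAR : K ⊆ AR)
    (hkey : ∀ C : α, (hC : C ∈ A i) → FD (X i) K C hKAi hC)
    (R' : Set (↥AR → β)) (hR' : R' ⊆ proj hAR (joinW A X)) :
    proj (Set.subset_iUnion A i) { u ∈ joinW A X | restrict hAR u ∈ R' } =
      proj (Set.subset_union_right : A i ⊆ AR ∪ A i)
        { v : ↥(AR ∪ A i) → β |
            restrict Set.subset_union_left v ∈ R' ∧
            restrict Set.subset_union_right v ∈ X i } := by
  ext t
  constructor
  · rintro ⟨u, ⟨huW, huR⟩, rfl⟩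
    exact ⟨restrict (Set.union_subset hAR (Set.subset_iUnion A i)) u, ⟨huR, huW i⟩, rfl⟩
  · rintro ⟨v, ⟨hvR, hvX⟩, rfl⟩
    obtain ⟨w, hwW, hwAR⟩ := hR' hvR
    refine ⟨w, ⟨hwW, hwAR ▸ hvR⟩, ?_⟩
    funext x
    refine (hkey x.1 x.2 (restrict (Set.subset_iUnion A i) w) (hwW i)
      (restrict Set.subset_union_right v) hvX ?_)
    funext y
    have := congrFun hwAR ⟨y.1, hKAR y.2⟩
    exact this
end

section
/- (Key lifting to partial-witness relations.) Let J ⊆ {1, …, n} with i ∈ J, and suppose K ⊆ A_i ∩ A_R is such that the functional dependency K → C holds in X_i for some attribute C ∈ A_i. Then the functional dependency A_R → C holds in the partial-witness relation W_J. In particular, if K is a key of X_i contained in A_R, then A_R functionally determines every attribute of A_i in W_J. -/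
/-- **Key lifting to partial-witness relations.** If `i ∈ J`, `K ⊆ A_i ∩ A_R`, and the
functional dependency `K → C` holds in `X_i` for an attribute `C ∈ A_i`, then the
functional dependency `A_R → C` holds in the partial-witness relation `W_J`. -/
theorem key_lifting {α β : Type*} {n : ℕ}
    (A : Fin n → Set α) (X : ∀ j, Set (↥(A j) → β))
    (AR : Set α) (hAR : AR ⊆ ⋃ j, A j)
    (J : Set (Fin n)) (i : Fin n) (hi : i ∈ J)
    (K : Set α) (hK : K ⊆ A i ∩ AR)
    (C : α) (hC : C ∈ A i)
    (hfd : FD (X i) K C (hK.trans Set.inter_subset_left) hC) :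
    FD (WJ A X AR hAR J) AR C Set.subset_union_left
      (Set.mem_union_right _ (Set.mem_biUnion hi hC)) := by
  intro v₁ hv₁ v₂ hv₂ hagree
  have h₁ := hv₁.2 i hi
  have h₂ := hv₂.2 i hi
  have hKagree : restrict (hK.trans Set.inter_subset_left)
      (restrict ((Set.subset_biUnion_of_mem hi).trans Set.subset_union_right) v₁) =
      restrict (hK.trans Set.inter_subset_left)
      (restrict ((Set.subset_biUnion_of_mem hi).trans Set.subset_union_right) v₂) := by
    funext x
    have hxAR : x.1 ∈ AR := (hK x.2).2
    exact congrFun hagree ⟨x.1, hxAR⟩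
  exact hfd _ h₁ _ h₂ hKagree
end

section
/- (Correctness of Algorithm 1.) Let D ⊆ α be a set of attributes (the attributes known to be functionally determined by A_R), let i ∈ {1, …, n}, and let J ⊆ {1, …, n} be the least set containing i that is closed under the rule: if j ∈ J, C ∈ A_j, and C ∉ D, then every index k with C ∈ A_k belongs to J. Then every attribute C ∈ A'_J ∩ A''_J belongs to D. Consequently, if the functional dependency A_R → C holds in the partial-witness relation W_J for every C ∈ D ∩ A'_J, then Theorem 1 applies to J, so for every R' ⊆ R: π_{A_i}({ u ∈ W : u|A_R ∈ R' }) = π_{A_i}({ v a tuple over A_R ∪ A'_J : v|A_R ∈ R' and v|A_j ∈ X_j for every j ∈ J }). -/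
/-- `J` is closed under Algorithm 1's saturation rule: if `j ∈ J`, `C ∈ A_j`, and
`C ∉ D`, then every index `k` whose schema contains `C` belongs to `J`. -/
def AlgClosed {α : Type*} {n : ℕ} (A : Fin n → Set α) (D : Set α) (J : Set (Fin n)) : Prop :=
  ∀ j ∈ J, ∀ C ∈ A j, C ∉ D → ∀ k, C ∈ A k → k ∈ J

/-- **Correctness of Algorithm 1.** Let `D` be a set of attributes (those known to be
functionally determined by `A_R`), `i` an index, and `J` the least set containing `i`
closed under the saturation rule. Then every attribute in `A'_J ∩ A''_J` lies in `D`;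
consequently, if `A_R → C` holds in `W_J` for every `C ∈ D ∩ A'_J`, then the full and
reduced provenance queries for `X_i` coincide for every `R' ⊆ R`. -/
theorem algorithm1_correct {α β : Type*} {n : ℕ}
    (A : Fin n → Set α) (X : ∀ j, Set (↥(A j) → β))
    (AR : Set α) (hAR : AR ⊆ ⋃ j, A j)
    (D : Set α) (i : Fin n) (J : Set (Fin n))
    (hiJ : i ∈ J) (hclosed : AlgClosed A D J)
    (hleast : ∀ J' : Set (Fin n), i ∈ J' → AlgClosed A D J' → J ⊆ J') :
    (∀ C : α, C ∈ ⋃ j ∈ J, A j → C ∈ ⋃ j ∈ Jᶜ, A j → C ∈ D) ∧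
    ((∀ C : α, C ∈ D → ∀ hC' : C ∈ ⋃ j ∈ J, A j,
        FD (WJ A X AR hAR J) AR C Set.subset_union_left (Set.mem_union_right _ hC')) →
      ∀ R' : Set (↥AR → β), R' ⊆ proj hAR (joinW A X) →
        proj (Set.subset_iUnion A i) { u ∈ joinW A X | restrict hAR u ∈ R' } =
          proj ((Set.subset_biUnion_of_mem hiJ).trans Set.subset_union_right :
                A i ⊆ AR ∪ ⋃ j ∈ J, A j)
            { v : ↥(AR ∪ ⋃ j ∈ J, A j) → β |
                restrict Set.subset_union_left v ∈ R' ∧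
                ∀ j, ∀ hj : j ∈ J,
                  restrict ((Set.subset_biUnion_of_mem hj).trans Set.subset_union_right) v
                    ∈ X j }) := by
  classical
  have hsub : (AR ∪ ⋃ j ∈ J, A j) ⊆ ⋃ j, A j :=
    Set.union_subset hAR (Set.iUnion₂_subset fun j _ => Set.subset_iUnion A j)
  have part1 : ∀ C : α, C ∈ ⋃ j ∈ J, A j → C ∈ ⋃ j ∈ Jᶜ, A j → C ∈ D := by
    intro C hC1 hC2
    simp only [Set.mem_iUnion, exists_prop] at hC1 hC2
    obtain ⟨j, hj, hCj⟩ := hC1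
    obtain ⟨k, hk, hCk⟩ := hC2
    by_contra hCD
    exact hk (hclosed j hj C hCj hCD k hCk)
  refine ⟨part1, ?_⟩
  intro hFD R' hR'
  ext t
  simp only [proj, Set.mem_image, Set.mem_setOf_eq]
  constructor
  · rintro ⟨u, ⟨huW, huR⟩, rfl⟩
    exact ⟨restrict hsub u, ⟨huR, fun j hj => huW j⟩, rfl⟩
  · rintro ⟨v, ⟨hvR, hvX⟩, rfl⟩
    obtain ⟨w, hwW, hw⟩ := hR' hvR
    set u : ↥(⋃ j, A j) → β :=
      fun x => if h : x.1 ∈ AR ∪ ⋃ j ∈ J, A j then v ⟨x.1, h⟩ else w x with hu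
    have hvw : ∀ (C : α) (hC : C ∈ ⋃ j, A j) (h : C ∈ AR ∪ ⋃ j ∈ J, A j),
        (C ∈ ⋃ j ∈ Jᶜ, A j) → v ⟨C, h⟩ = w ⟨C, hC⟩ := by
      intro C hC h hCc
      rcases h with hAR' | hJ'
      · exact (congrFun hw ⟨C, hAR'⟩).symm
      · have hD : C ∈ D := part1 C hJ' hCc
        have hfd := hFD C hD hJ'
        have hvW : v ∈ WJ A X AR hAR J := ⟨hR' hvR, hvX⟩
        have hwW' : restrict hsub w ∈ WJ A X AR hAR J :=
          ⟨⟨w, hwW, rfl⟩, fun j hj => hwW j⟩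
        have hagree : restrict (Set.subset_union_left : AR ⊆ AR ∪ ⋃ j ∈ J, A j) v
            = restrict Set.subset_union_left (restrict hsub w) := hw.symm
        exact hfd v hvW (restrict hsub w) hwW' hagree
    have huW : u ∈ joinW A X := by
      intro j
      by_cases hj : j ∈ J
      · have heq : restrict (Set.subset_iUnion A j) u
            = restrict ((Set.subset_biUnion_of_mem hj).trans Set.subset_union_right) v := by
          funext x
          have h : x.1 ∈ AR ∪ ⋃ j ∈ J, A j :=
            Set.mem_union_right _ (Set.mem_biUnion hj x.2)
          simp only [restrict, hu]
          rw [dif_pos h]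
        rw [heq]; exact hvX j hj
      · have heq : restrict (Set.subset_iUnion A j) u
            = restrict (Set.subset_iUnion A j) w := by
          funext x
          simp only [restrict, hu]
          split_ifs with h
          · exact hvw x.1 (Set.subset_iUnion A j x.2) h (Set.mem_biUnion hj x.2)
          · rfl
        rw [heq]; exact hwW j
    refine ⟨u, ⟨huW, ?_⟩, ?_⟩
    · have heq : restrict hAR u
          = restrict (Set.subset_union_left : AR ⊆ AR ∪ ⋃ j ∈ J, A j) v := by
        funext x
        simp only [restrict, hu]
        rw [dif_pos (Set.mem_union_left _ x.2)]
      rw [heq]; exact hvR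
    · have heq : restrict (Set.subset_iUnion A i) u
          = restrict ((Set.subset_biUnion_of_mem hiJ).trans Set.subset_union_right) v := by
        funext x
        simp only [restrict, hu]
        rw [dif_pos (Set.mem_union_right _ (Set.mem_biUnion hiJ x.2))]
      rw [heq]
end

section
/- (Provenance for group-by (SPJA) rules with a key among the grouping columns.) Let GL ⊆ A_RHS be a set of grouping attributes and let G' ⊆ π_GL(W) be any set of selected groups. Suppose K ⊆ A_i ∩ GL is such that the functional dependency K → C holds in X_i for every C ∈ A_i (K is a key of X_i contained in the grouping columns). Then the provenance of the selected groups in X_i can be computed by a single join: π_{A_i}({ u ∈ W : u|GL ∈ G' }) = π_{A_i}({ w a tuple over GL ∪ A_i : w|GL ∈ G' and w|A_i ∈ X_i }). -/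
/-- **Provenance for group-by (SPJA) rules with a key among the grouping columns.**
If `GB ⊆ A_RHS` is the set of grouping attributes, `G' ⊆ π_GL(W)` a set of selected
groups, and `K ⊆ A_i ∩ GB` is a key of `X_i`, then the provenance of the selected
groups in `X_i` is computed by a single join:
`π_{A_i}({u ∈ W : u|GB ∈ G'}) = π_{A_i}({w over GB ∪ A_i : w|GB ∈ G', w|A_i ∈ X_i})`. -/
theorem groupby_key_provenance {α β : Type*} {n : ℕ}
    (A : Fin n → Set α) (X : ∀ j, Set (↥(A j) → β))
    (GB : Set α) (hGL : GB ⊆ ⋃ j, A j)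
    (G' : Set (↥GB → β)) (hG' : G' ⊆ proj hGL (joinW A X))
    (i : Fin n) (K : Set α) (hK : K ⊆ A i ∩ GB)
    (hkey : ∀ C : α, (hC : C ∈ A i) → FD (X i) K C (hK.trans Set.inter_subset_left) hC) :
    proj (Set.subset_iUnion A i) { u ∈ joinW A X | restrict hGL u ∈ G' } =
      proj (Set.subset_union_right : A i ⊆ GB ∪ A i)
        { w : ↥(GB ∪ A i) → β |
            restrict Set.subset_union_left w ∈ G' ∧
            restrict Set.subset_union_right w ∈ X i } := by
  ext t
  constructor
  · rintro ⟨u, ⟨huW, huG⟩, rfl⟩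
    exact ⟨restrict (Set.union_subset hGL (Set.subset_iUnion A i)) u, ⟨huG, huW i⟩, rfl⟩
  · rintro ⟨w, ⟨hwG, hwX⟩, rfl⟩
    obtain ⟨u, huW, huGB⟩ := hG' hwG
    have hag : restrict (hK.trans Set.inter_subset_left)
        (restrict (Set.subset_union_right : A i ⊆ GB ∪ A i) w)
        = restrict (hK.trans Set.inter_subset_left) (restrict (Set.subset_iUnion A i) u) := by
      funext x
      exact (congrFun huGB ⟨x.1, (hK x.2).2⟩).symm
    have heq : restrict (Set.subset_union_right : A i ⊆ GB ∪ A i) w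
        = restrict (Set.subset_iUnion A i) u := by
      funext x
      exact hkey x.1 x.2 _ hwX _ (huW i) hag
    refine ⟨u, ⟨huW, ?_⟩, heq.symm⟩
    rw [huGB]; exact hwG
end

section
/- (Correctness of the hybrid approach with materialized keys, Program 4 Case 1.) Suppose K ⊆ A_i is a key of X_i: the functional dependency K → C holds in X_i for every C ∈ A_i. Define the materialized view RK := π_{A_R ∪ K}(W) (the query result augmented with the key attributes of X_i), and for R' ⊆ R define RK' := { v ∈ RK : v|A_R ∈ R' }. Then the provenance of R' in X_i can be computed from RK' by a single join with X_i: π_{A_i}({ u ∈ W : u|A_R ∈ R' }) = π_{A_i}({ w a tuple over A_R ∪ K ∪ A_i : w|(A_R ∪ K) ∈ RK' and w|A_i ∈ X_i }). -/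
/-- **Correctness of the hybrid approach with materialized keys (Program 4, Case 1).**
Let `K ⊆ A_i` be a key of `X_i`, let `RK := π_{A_R ∪ K}(W)` be the materialized view
(the result augmented with the key attributes of `X_i`), and for `R' ⊆ R` let
`RK' := {v ∈ RK : v|A_R ∈ R'}`. Then the provenance of `R'` in `X_i` is computed from
`RK'` by a single join with `X_i`. -/
theorem hybrid_case1 {α β : Type*} {n : ℕ}
    (A : Fin n → Set α) (X : ∀ j, Set (↥(A j) → β))
    (AR : Set α) (hAR : AR ⊆ ⋃ j, A j)
    (i : Fin n) (K : Set α) (hKAi : K ⊆ A i)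
    (hkey : ∀ C : α, (hC : C ∈ A i) → FD (X i) K C hKAi hC)
    (R' : Set (↥AR → β)) (hR' : R' ⊆ proj hAR (joinW A X)) :
    proj (Set.subset_iUnion A i) { u ∈ joinW A X | restrict hAR u ∈ R' } =
      proj (Set.subset_union_right : A i ⊆ (AR ∪ K) ∪ A i)
        { w : ↥((AR ∪ K) ∪ A i) → β |
            restrict Set.subset_union_left w ∈
              { v ∈ proj (Set.union_subset hAR (hKAi.trans (Set.subset_iUnion A i)))
                      (joinW A X) |
                  restrict Set.subset_union_left v ∈ R' } ∧
            restrict Set.subset_union_right w ∈ X i } := by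
  have hsub : ((AR ∪ K) ∪ A i) ⊆ ⋃ j, A j :=
    Set.union_subset (Set.union_subset hAR (hKAi.trans (Set.subset_iUnion A i)))
      (Set.subset_iUnion A i)
  ext s
  constructor
  · rintro ⟨u, ⟨huW, huR⟩, rfl⟩
    exact ⟨restrict hsub u, ⟨⟨⟨u, huW, rfl⟩, huR⟩, huW i⟩, rfl⟩
  · rintro ⟨w, ⟨⟨⟨u, huW, hproj⟩, hwR⟩, hwXi⟩, rfl⟩
    have huAR : restrict hAR u = restrict Set.subset_union_left
        (restrict (Set.union_subset hAR (hKAi.trans (Set.subset_iUnion A i))) u) := rfl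
    have hK : restrict hKAi (restrict (Set.subset_iUnion A i) u)
        = restrict hKAi (restrict Set.subset_union_right w) := by
      funext x
      have := congrFun hproj ⟨x.1, Or.inr x.2⟩
      exact this
    have heq : restrict (Set.subset_iUnion A i) u = restrict Set.subset_union_right w := by
      funext x
      exact hkey x.1 x.2 _ (huW i) _ hwXi hK
    refine ⟨u, ⟨huW, ?_⟩, heq⟩
    rw [huAR, hproj]
    exact hwR
end

section
/- (Composition of provenance through a view, Program 4 Case 2.) Let T_1, …, T_m be relations with schemas B_1, …, B_m ⊆ α, let W_V be their natural join over B := B_1 ∪ … ∪ B_m, let A_V ⊆ B, and let the view be V := π_{A_V}(W_V). Let S_1, …, S_n be relations with schemas A_1, …, A_n ⊆ α, let W be the natural join of S_1, …, S_n and V over A_RHS := A_1 ∪ … ∪ A_n ∪ A_V, let A_R ⊆ A_RHS, R := π_{A_R}(W), and R' ⊆ R. Assume the view's internal attributes do not leak: B ∩ A_RHS ⊆ A_V. Let PV := π_{A_V}({ u ∈ W : u|A_R ∈ R' }) be the provenance of R' in the view V. Then for every k, the provenance of R' in the base table T_k computed through the view equals its provenance in the unfolded query: π_{B_k}({ x ∈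 W_V : x|A_V ∈ PV }) = π_{B_k}({ w a tuple over A_RHS ∪ B : w|A_j ∈ S_j for every j, w|B_{k'} ∈ T_{k'} for every k', and w|A_R ∈ R' }). -/
/-- The natural join `W` of the relations `S_1, …, S_n` (with schemas `A j`) together
with the view `V := π_{A_V}(W_V)`, where `W_V` is the natural join of the base tables
`T_1, …, T_m` (with schemas `B k`); the join is over `A_RHS := (⋃ j, A j) ∪ A_V`. -/
def outerJoin {α β : Type*} {m n : ℕ} (B : Fin m → Set α) (T : ∀ k, Set (↥(B k) → β))
    (AV : Set α) (hAV : AV ⊆ ⋃ k, B k)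
    (A : Fin n → Set α) (S : ∀ j, Set (↥(A j) → β)) :
    Set (↥((⋃ j, A j) ∪ AV) → β) :=
  { u | (∀ j, restrict ((Set.subset_iUnion A j).trans Set.subset_union_left) u ∈ S j) ∧
        restrict Set.subset_union_right u ∈ proj hAV (joinW B T) }

/-- **Composition of provenance through a view (Program 4, Case 2).** Let
`V := π_{A_V}(W_V)` be a view over the join `W_V` of base tables `T_1, …, T_m`, and let
`W` be the join of `S_1, …, S_n` and `V`, with result `R := π_{A_R}(W)` and selected
rows `R' ⊆ R`. If the view's internal attributes do not leak (`B ∩ A_RHS ⊆ A_V`), then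
for every `k` the provenance of `R'` in `T_k` computed through the view (from the
provenance `PV` of `R'` in `V`) equals its provenance in the unfolded query. -/
theorem view_composition {α β : Type*} {m n : ℕ}
    (B : Fin m → Set α) (T : ∀ k, Set (↥(B k) → β))
    (AV : Set α) (hAV : AV ⊆ ⋃ k, B k)
    (A : Fin n → Set α) (S : ∀ j, Set (↥(A j) → β))
    (AR : Set α) (hAR : AR ⊆ (⋃ j, A j) ∪ AV)
    (hleak : (⋃ k, B k) ∩ ((⋃ j, A j) ∪ AV) ⊆ AV)
    (R' : Set (↥AR → β))
    (hR' : R' ⊆ proj hAR (outerJoin B T AV hAV A S))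
    (k : Fin m) :
    proj (Set.subset_iUnion B k)
      { x ∈ joinW B T |
          restrict hAV x ∈
            proj (Set.subset_union_right : AV ⊆ (⋃ j, A j) ∪ AV)
              { u ∈ outerJoin B T AV hAV A S | restrict hAR u ∈ R' } } =
      proj ((Set.subset_iUnion B k).trans Set.subset_union_right :
            B k ⊆ ((⋃ j, A j) ∪ AV) ∪ ⋃ k, B k)
        { w : ↥(((⋃ j, A j) ∪ AV) ∪ ⋃ k, B k) → β |
            (∀ j, restrict (((Set.subset_iUnion A j).trans
                Set.subset_union_left).trans Set.subset_union_left) w ∈ S j) ∧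
            (∀ k', restrict ((Set.subset_iUnion B k').trans Set.subset_union_right) w
              ∈ T k') ∧
            restrict (hAR.trans Set.subset_union_left) w ∈ R' } := by
  classical
  ext t
  simp only [proj, Set.mem_image, Set.mem_setOf_eq]
  constructor
  · rintro ⟨x, ⟨hx, u, ⟨⟨hS, hV⟩, hR⟩, huv⟩, rfl⟩
    -- key: u and x agree on AV
    have key : ∀ (a : α) (ha : a ∈ (⋃ j, A j) ∪ AV) (hb : a ∈ ⋃ k, B k),
        u ⟨a, ha⟩ = x ⟨a, hb⟩ := by
      intro a ha hb
      have hav : a ∈ AV := hleak ⟨hb, ha⟩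
      have := congrFun huv ⟨a, hav⟩
      simpa [restrict] using this
    refine ⟨fun a => if h : (a : α) ∈ (⋃ j, A j) ∪ AV then u ⟨a, h⟩
        else x ⟨a, a.2.resolve_left h⟩, ⟨?_, ?_, ?_⟩, ?_⟩
    · intro j
      have : restrict (((Set.subset_iUnion A j).trans
            Set.subset_union_left).trans Set.subset_union_left)
          (fun (a : ↥(((⋃ j, A j) ∪ AV) ∪ ⋃ k, B k)) =>
            if h : (a : α) ∈ (⋃ j, A j) ∪ AV then u ⟨a, h⟩
            else x ⟨a, a.2.resolve_left h⟩)
          = restrict ((Set.subset_iUnion A j).trans Set.subset_union_left) u := by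
        funext a
        have ha : (a : α) ∈ (⋃ j, A j) ∪ AV := Or.inl (Set.mem_iUnion.2 ⟨j, a.2⟩)
        simp [restrict, ha]
      rw [this]; exact hS j
    · intro k'
      have : restrict ((Set.subset_iUnion B k').trans Set.subset_union_right)
          (fun (a : ↥(((⋃ j, A j) ∪ AV) ∪ ⋃ k, B k)) =>
            if h : (a : α) ∈ (⋃ j, A j) ∪ AV then u ⟨a, h⟩
            else x ⟨a, a.2.resolve_left h⟩)
          = restrict (Set.subset_iUnion B k') x := by
        funext a
        have hb : (a : α) ∈ ⋃ k, B k := Set.mem_iUnion.2 ⟨k', a.2⟩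
        by_cases h : (a : α) ∈ (⋃ j, A j) ∪ AV
        · simp [restrict, h, key _ h hb]
        · simp [restrict, h]
      rw [this]; exact hx k'
    · have : restrict (hAR.trans Set.subset_union_left)
          (fun (a : ↥(((⋃ j, A j) ∪ AV) ∪ ⋃ k, B k)) =>
            if h : (a : α) ∈ (⋃ j, A j) ∪ AV then u ⟨a, h⟩
            else x ⟨a, a.2.resolve_left h⟩)
          = restrict hAR u := by
        funext a
        have ha : (a : α) ∈ (⋃ j, A j) ∪ AV := hAR a.2
        simp [restrict, ha]
      rw [this]; exact hR
    · funext a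
      have hb : (a : α) ∈ ⋃ k, B k := Set.mem_iUnion.2 ⟨k, a.2⟩
      by_cases h : (a : α) ∈ (⋃ j, A j) ∪ AV
      · simp [restrict, h, key _ h hb]
      · simp [restrict, h]
  · rintro ⟨w, ⟨hS, hT, hR⟩, rfl⟩
    refine ⟨restrict Set.subset_union_right w, ⟨fun k' => hT k',
      restrict Set.subset_union_left w,
      ⟨⟨fun j => hS j, restrict Set.subset_union_right w, fun k' => hT k', rfl⟩, hR⟩, rfl⟩, rfl⟩
end
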